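/- arXiv:1703.05934 — 3 statements merged into one kernel-verified Lean document; each statement's English description precedes it below -/
import Mathlib

section
/- Let $N \ge 2$, $0 \le \gamma < N$, and let $F(x) = \left(\frac{N-\gamma}{N}\right)^{\frac{N}{N-\gamma}} |x|^{\frac{\gamma}{N-\gamma}} x$. Let $u : \mathbb{R}^N \to \mathbb{R}$ be differentiable at $F(x)$ for some $x \ne 0$, and define $v(x) = \left(\frac{N-\gamma}{N}\right)^{\frac{N-1}{N}} u(F(x))$. Then the pointwise inequality $|\nabla v(x)| \le \left(\frac{N-\gamma}{N}\right)^{\frac{N-1}{N}} |F(x)|^{\frac{\gamma}{N}} |\nabla u(F(x))|$ holds. -/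
/-!
`F` is `c • (‖y‖ ^ α • y)` with `α = γ / (N - γ)`. Away from the origin its derivative is
`c (‖x‖ ^ α • id + α ‖x‖ ^ (α - 2) ⟨x, ·⟩ x)`, whose operator norm is at most `c (1 + α) ‖x‖ ^ α`
by Cauchy–Schwarz and `α ≥ 0`; the chain rule then bounds `‖∇v(x)‖` by this times the constant and
`‖∇u(F x)‖`. Finally, the constants are tuned so that `c (1 + α) ‖x‖ ^ α = ‖F x‖ ^ (γ / N)`.
-/

open Real

section RadialPower

variable {E : Type*} [NormedAddCommGroup E] [InnerProductSpace ℝ E]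

theorem hasFDerivAt_norm_rpow_of_ne_zero (α : ℝ) {x : E} (hx : x ≠ 0) :
    HasFDerivAt (fun y : E => ‖y‖ ^ α) ((α * ‖x‖ ^ (α - 2)) • innerSL ℝ x) x := by
  have hx2 : ‖x‖ ^ 2 ≠ 0 := by positivity
  convert (hasStrictFDerivAt_norm_sq x).hasFDerivAt.rpow_const (p := α / 2) (Or.inl hx2) using 1
  · funext y
    rw [← rpow_natCast, ← rpow_mul (norm_nonneg y)]
    ring_nf
  · rw [← rpow_natCast, ← rpow_mul (norm_nonneg x), ← Nat.cast_smul_eq_nsmul ℝ, smul_smul]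
    congr 1
    ring_nf

theorem hasFDerivAt_norm_rpow_smul (α : ℝ) {x : E} (hx : x ≠ 0) :
    HasFDerivAt (fun y : E => ‖y‖ ^ α • y)
      (‖x‖ ^ α • ContinuousLinearMap.id ℝ E +
        ((α * ‖x‖ ^ (α - 2)) • innerSL ℝ x).smulRight x) x :=
  (hasFDerivAt_norm_rpow_of_ne_zero α hx).smul (hasFDerivAt_id x)

theorem norm_fderiv_norm_rpow_smul_le {α : ℝ} (hα : 0 ≤ α) {x : E} (hx : x ≠ 0) :
    ‖fderiv ℝ (fun y : E => ‖y‖ ^ α • y) x‖ ≤ (1 + α) * ‖x‖ ^ α := by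
  have hx' : 0 < ‖x‖ := norm_pos_iff.mpr hx
  rw [(hasFDerivAt_norm_rpow_smul α hx).fderiv]
  calc _ ≤ ‖‖x‖ ^ α • ContinuousLinearMap.id ℝ E‖ +
        ‖((α * ‖x‖ ^ (α - 2)) • innerSL ℝ x).smulRight x‖ := norm_add_le _ _
    _ ≤ ‖x‖ ^ α * 1 + α * ‖x‖ ^ (α - 2) * ‖x‖ * ‖x‖ := by
        rw [norm_smul, ContinuousLinearMap.norm_smulRight_apply, norm_smul, innerSL_apply_norm,
          norm_of_nonneg (by positivity), norm_of_nonneg (by positivity)]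
        gcongr
        exact ContinuousLinearMap.norm_id_le
    _ = (1 + α) * ‖x‖ ^ α := by
        rw [rpow_sub hx', rpow_two]
        field_simp

end RadialPower

theorem norm_gradient_const_mul_comp_le {E G : Type*} [NormedAddCommGroup E]
    [InnerProductSpace ℝ E] [CompleteSpace E] [NormedAddCommGroup G] [InnerProductSpace ℝ G]
    [CompleteSpace G] {u : G → ℝ} {f : E → G} {x : E} (a : ℝ)
    (hu : DifferentiableAt ℝ u (f x)) (hf : DifferentiableAt ℝ f x) :
    ‖gradient (fun y => a * u (f y)) x‖ ≤ |a| * ‖gradient u (f x)‖ * ‖fderiv ℝ f x‖ := by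
  simp only [gradient, LinearIsometryEquiv.norm_map]
  have hcomp : HasFDerivAt (fun y => u (f y)) ((fderiv ℝ u (f x)).comp (fderiv ℝ f x)) x :=
    hu.hasFDerivAt.comp x hf.hasFDerivAt
  rw [(hcomp.const_mul a).fderiv, norm_smul, norm_eq_abs, mul_assoc]
  gcongr
  exact ContinuousLinearMap.opNorm_comp_le _ _

-- With `r = (n - γ) / n`, both sides equal `r ^ α * t ^ α` for `α = γ / (n - γ)`.
theorem rpow_scaled_rpow_mul_self {n γ t : ℝ} (hn : 0 < n) (hγn : γ < n) (ht : 0 < t) :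
    (((n - γ) / n) ^ (n / (n - γ)) * t ^ (γ / (n - γ)) * t) ^ (γ / n) =
      ((n - γ) / n) ^ (n / (n - γ)) * (1 + γ / (n - γ)) * t ^ (γ / (n - γ)) := by
  have hnγ : 0 < n - γ := sub_pos.mpr hγn
  have hr : 0 < (n - γ) / n := div_pos hnγ hn
  have h1 : (1 : ℝ) + γ / (n - γ) = ((n - γ) / n) ^ (-1 : ℝ) := by
    rw [rpow_neg_one]; field_simp; ring
  rw [h1, ← rpow_add hr, mul_assoc, ← rpow_add_one ht.ne', mul_rpow (by positivity) (by positivity),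
    ← rpow_mul hr.le, ← rpow_mul ht.le]
  congr 2 <;> field_simp <;> ring

theorem gradient_pointwise_bound_under_change_of_function_general (N : ℕ)
    (γ : ℝ) (hγ0 : 0 ≤ γ) (hγ : γ < N)
    (F : EuclideanSpace ℝ (Fin N) → EuclideanSpace ℝ (Fin N))
    (hF : ∀ x, F x = ((((N : ℝ) - γ) / N) ^ ((N : ℝ) / ((N : ℝ) - γ)) *
      ‖x‖ ^ (γ / ((N : ℝ) - γ))) • x)
    (u : EuclideanSpace ℝ (Fin N) → ℝ)
    (x : EuclideanSpace ℝ (Fin N)) (hx : x ≠ 0)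
    (hu : DifferentiableAt ℝ u (F x))
    (v : EuclideanSpace ℝ (Fin N) → ℝ)
    (hv : ∀ y, v y = (((N : ℝ) - γ) / N) ^ (((N : ℝ) - 1) / N) * u (F y)) :
    ‖gradient v x‖ ≤ (((N : ℝ) - γ) / N) ^ (((N : ℝ) - 1) / N) *
      ‖F x‖ ^ (γ / N) * ‖gradient u (F x)‖ := by
  have hN : 0 < (N : ℝ) := hγ0.trans_lt hγ
  have hr : 0 < ((N : ℝ) - γ) / N := div_pos (sub_pos.mpr hγ) hN
  set c := (((N : ℝ) - γ) / N) ^ ((N : ℝ) / ((N : ℝ) - γ))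
  set α := γ / ((N : ℝ) - γ)
  have hc : 0 < c := by positivity
  have hα : 0 ≤ α := div_nonneg hγ0 (sub_pos.mpr hγ).le
  have hFc : F = c • fun y => ‖y‖ ^ α • y := funext fun y => by rw [hF, Pi.smul_apply, smul_smul]
  have hradial := (hasFDerivAt_norm_rpow_smul α hx).differentiableAt
  have hFd : fderiv ℝ F x = c • fderiv ℝ (fun y => ‖y‖ ^ α • y) x := by
    rw [hFc, fderiv_const_smul hradial]
  have hFx : ‖F x‖ = c * ‖x‖ ^ α * ‖x‖ := by
    rw [hF, norm_smul, norm_of_nonneg (by positivity)]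
  obtain rfl : v = fun y => (((N : ℝ) - γ) / N) ^ (((N : ℝ) - 1) / N) * u (F y) := funext hv
  calc _ ≤ |(((N : ℝ) - γ) / N) ^ (((N : ℝ) - 1) / N)| * ‖gradient u (F x)‖ * ‖fderiv ℝ F x‖ :=
        norm_gradient_const_mul_comp_le _ hu (hFc ▸ hradial.const_smul c)
    _ ≤ (((N : ℝ) - γ) / N) ^ (((N : ℝ) - 1) / N) * ‖gradient u (F x)‖ *
          (c * ((1 + α) * ‖x‖ ^ α)) := by
        rw [abs_of_pos (by positivity), hFd, norm_smul, norm_of_nonneg hc.le]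
        gcongr
        exact norm_fderiv_norm_rpow_smul_le hα hx
    _ = _ := by
        rw [hFx, rpow_scaled_rpow_mul_self hN hγ (norm_pos_iff.mpr hx)]
        ring

theorem gradient_pointwise_bound_under_change_of_function (N : ℕ) (hN : 2 ≤ N)
    (γ : ℝ) (hγ0 : 0 ≤ γ) (hγ : γ < N)
    (F : EuclideanSpace ℝ (Fin N) → EuclideanSpace ℝ (Fin N))
    (hF : ∀ x, F x = ((((N : ℝ) - γ) / N) ^ ((N : ℝ) / ((N : ℝ) - γ)) *
      ‖x‖ ^ (γ / ((N : ℝ) - γ))) • x)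
    (u : EuclideanSpace ℝ (Fin N) → ℝ)
    (x : EuclideanSpace ℝ (Fin N)) (hx : x ≠ 0)
    (hu : DifferentiableAt ℝ u (F x))
    (v : EuclideanSpace ℝ (Fin N) → ℝ)
    (hv : ∀ y, v y = (((N : ℝ) - γ) / N) ^ (((N : ℝ) - 1) / N) * u (F y)) :
    ‖gradient v x‖ ≤ (((N : ℝ) - γ) / N) ^ (((N : ℝ) - 1) / N) *
      ‖F x‖ ^ (γ / N) * ‖gradient u (F x)‖ :=
  gradient_pointwise_bound_under_change_of_function_general N γ hγ0 hγ F hF u x hx hu v hv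
end

section
/- Let $N \ge 2$, $-\infty < \gamma \le \beta < N$, and let $u_n$ be the Moser sequence defined by $u_n(x) = A_n b_n$ for $|x| < e^{-b_n}$, $u_n(x) = A_n \log(1/|x|)$ for $e^{-b_n} \le |x| < 1$, $u_n(x) = 0$ for $|x| \ge 1$, where $A_n = \omega_{N-1}^{-1/N}(n/(N-\beta))^{-1/N}$ and $b_n = n/(N-\beta)$. Then $n \int_{\mathbb{R}^N} |u_n(x)|^N |x|^{-\gamma} dx \to \frac{(N-\beta)\, \Gamma(N+1)}{(N-\gamma)^{N+1}}$ as $n \to \infty$. -/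
open MeasureTheory

noncomputable def sphereArea (N : ℕ) : ℝ :=
  N * (volume (Metric.ball (0 : EuclideanSpace ℝ (Fin N)) 1)).toReal

noncomputable def moser (N : ℕ) (β : ℝ) (n : ℕ) (x : EuclideanSpace ℝ (Fin N)) : ℝ :=
  let b : ℝ := n / ((N : ℝ) - β)
  let A : ℝ := (sphereArea N) ^ (-(1 : ℝ) / N) * b ^ (-(1 : ℝ) / N)
  if ‖x‖ < Real.exp (-b) then A * b
  else if ‖x‖ < 1 then A * Real.log (1 / ‖x‖)
  else 0

/-!
In polar coordinates the weighted integral becomes `ω_{N-1} ∫₀¹ r^(N-γ-1) u_n(r)^N dr`. On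
`r < e^{-b_n}` the integrand is a power of `r`; on `e^{-b_n} ≤ r ≤ 1` the substitution
`r = e^{-t/(N-γ)}` turns it into a truncated Gamma integral. Since `n ω_{N-1} A_n^N = N - β`,
with `X = (N - γ) b_n` one gets
`n ‖u_n‖^N = (N - β) / (N - γ)^(N+1) * (X^N e^{-X} + ∫₀^X t^N e^{-t} dt)`,
and the bracket tends to `Γ(N+1)` as `X → ∞`.
-/

open Set Filter Real Topology

noncomputable def moserProfile (A b r : ℝ) : ℝ :=
  if r < exp (-b) then A * b else if r < 1 then A * log (1 / r) else 0

lemma moser_eq_moserProfile (N : ℕ) (β : ℝ) (n : ℕ) (x : EuclideanSpace ℝ (Fin N)) :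
    moser N β n x = moserProfile
      (sphereArea N ^ (-(1 : ℝ) / N) * ((n : ℝ) / (N - β)) ^ (-(1 : ℝ) / N)) (n / (N - β)) ‖x‖ :=
  rfl

lemma measurable_moserProfile (A b : ℝ) : Measurable (moserProfile A b) :=
  Measurable.ite measurableSet_Iio measurable_const <|
    Measurable.ite measurableSet_Iio (by fun_prop) measurable_const

lemma moserProfile_of_le_exp (A : ℝ) {b r : ℝ} (hb : 0 < b) (hr : r ≤ exp (-b)) :
    moserProfile A b r = A * b := by
  rcases hr.lt_or_eq with hr | rfl
  · exact if_pos hr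
  · rw [moserProfile, if_neg (lt_irrefl _),
      if_pos (Real.exp_lt_one_iff.mpr (neg_lt_zero.mpr hb)), one_div, ← exp_neg, neg_neg, log_exp]

lemma moserProfile_of_mem_Icc (A : ℝ) {b r : ℝ} (hr : r ∈ Icc (exp (-b)) 1) :
    moserProfile A b r = A * log (1 / r) := by
  rcases hr.2.lt_or_eq with hr1 | rfl
  · rw [moserProfile, if_neg hr.1.not_gt, if_pos hr1]
  · rw [moserProfile, if_neg hr.1.not_gt, if_neg (lt_irrefl _), div_one, log_one, mul_zero]

lemma moserProfile_of_one_lt (A : ℝ) {b r : ℝ} (hb : 0 ≤ b) (hr : 1 < r) :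
    moserProfile A b r = 0 := by
  have hexp : exp (-b) ≤ 1 := Real.exp_le_one_iff.mpr (neg_nonpos.mpr hb)
  rw [moserProfile, if_neg (hexp.trans hr.le).not_gt, if_neg hr.not_gt]

lemma moserProfile_nonneg {A b : ℝ} (hA : 0 ≤ A) (hb : 0 ≤ b) (r : ℝ) :
    0 ≤ moserProfile A b r := by
  unfold moserProfile
  split_ifs with h₁ h₂
  · positivity
  · exact mul_nonneg hA
      (log_nonneg (one_le_one_div ((exp_pos _).trans_le (not_lt.mp h₁)) h₂.le))
  · exact le_rfl

lemma continuousOn_rpow_mul_log_inv_pow (p : ℝ) (N : ℕ) :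
    ContinuousOn (fun r : ℝ => r ^ p * log (1 / r) ^ N) (Ioi 0) := by
  refine ContinuousOn.mul (fun r hr => ?_) (fun r hr => ?_)
  · exact (continuousAt_id.rpow_const (Or.inl (ne_of_gt hr))).continuousWithinAt
  · have hr : r ≠ 0 := ne_of_gt hr
    exact ((continuousAt_const.div continuousAt_id hr).log (by simpa using hr)).pow N
      |>.continuousWithinAt

lemma integral_rpow_mul_log_inv_pow {d : ℝ} (hd : 0 < d) (b : ℝ) (N : ℕ) :
    ∫ r in exp (-b)..1, r ^ (d - 1) * log (1 / r) ^ N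
      = (∫ t in 0..d * b, exp (-t) * t ^ N) / d ^ (N + 1) := by
  -- substitute `r = exp (-t / d)`
  have hsub := intervalIntegral.integral_comp_mul_deriv' (a := 0) (b := d * b)
    (f := fun t => exp (-(t / d))) (f' := fun t => -(exp (-(t / d)) / d))
    (fun t _ => by simpa [div_eq_mul_inv] using ((hasDerivAt_id t).div_const d).neg.exp)
    (by fun_prop)
    ((continuousOn_rpow_mul_log_inv_pow (d - 1) N).mono (by rintro _ ⟨t, -, rfl⟩; exact exp_pos _))
  have hintegrand : ∀ t : ℝ, ((fun r : ℝ => r ^ (d - 1) * log (1 / r) ^ N) ∘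
      fun t => exp (-(t / d))) t * -(exp (-(t / d)) / d) = -(exp (-t) * t ^ N / d ^ (N + 1)) := by
    intro t
    have hexp : exp (-(t / d)) ^ (d - 1) * exp (-(t / d)) = exp (-t) := by
      rw [← exp_mul, ← exp_add]
      congr 1
      field_simp
      ring
    simp only [Function.comp_apply, one_div, log_inv, log_exp, neg_neg]
    rw [← hexp, div_pow, pow_succ]
    field_simp
  simp only [hintegrand, intervalIntegral.integral_neg, intervalIntegral.integral_div, neg_zero,
    zero_div, exp_zero, mul_div_cancel_left₀ b hd.ne'] at hsub
  rw [intervalIntegral.integral_symm, ← hsub, neg_neg]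

lemma integral_Ioi_rpow_mul_moserProfile_pow (A : ℝ) {b d : ℝ} (hb : 0 < b) (hd : 0 < d)
    {N : ℕ} (hN : N ≠ 0) :
    ∫ r in Ioi 0, r ^ (d - 1) * moserProfile A b r ^ N
      = A ^ N / d ^ (N + 1) *
          ((d * b) ^ N * exp (-(d * b)) + ∫ t in 0..d * b, exp (-t) * t ^ N) := by
  set g : ℝ → ℝ := fun r => r ^ (d - 1) * moserProfile A b r ^ N
  have hc : 0 < exp (-b) := exp_pos _
  have hc1 : exp (-b) ≤ 1 := Real.exp_le_one_iff.mpr (neg_nonpos.mpr hb.le)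
  have hinner : EqOn g (fun r => (A * b) ^ N * r ^ (d - 1)) (uIcc 0 (exp (-b))) :=
      fun r hr => by
    rw [uIcc_of_le hc.le] at hr
    simp only [g, moserProfile_of_le_exp A hb hr.2, mul_comm]
  have houter : EqOn g (fun r => A ^ N * (r ^ (d - 1) * log (1 / r) ^ N))
      (uIcc (exp (-b)) 1) := fun r hr => by
    rw [uIcc_of_le hc1] at hr
    simp only [g, moserProfile_of_mem_Icc A hr]
    ring
  have hI₁ : IntervalIntegrable g volume 0 (exp (-b)) :=
    ((intervalIntegral.intervalIntegrable_rpow' (by linarith)).const_mul _).congr_uIoo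
      (hinner.mono uIoo_subset_uIcc_self).symm
  have hI₂ : IntervalIntegrable g volume (exp (-b)) 1 := by
    refine ContinuousOn.intervalIntegrable (ContinuousOn.congr ?_ houter)
    refine ((continuousOn_rpow_mul_log_inv_pow _ N).const_smul (A ^ N)).mono fun r hr => ?_
    exact hc.trans_le (uIcc_of_le hc1 ▸ hr).1
  calc ∫ r in Ioi 0, g r = ∫ r in Ioc 0 1, g r :=
        setIntegral_eq_of_subset_of_forall_sdiff_eq_zero measurableSet_Ioi Ioc_subset_Ioi_self
          fun r hr => by
            simp [g, moserProfile_of_one_lt A hb.le (not_le.mp fun h => hr.2 ⟨hr.1, h⟩), hN]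
    _ = (∫ r in 0..exp (-b), g r) + ∫ r in exp (-b)..1, g r := by
        rw [intervalIntegral.integral_add_adjacent_intervals hI₁ hI₂,
          intervalIntegral.integral_of_le zero_le_one]
    _ = (A * b) ^ N * (exp (-b) ^ d / d)
          + A ^ N * ((∫ t in 0..d * b, exp (-t) * t ^ N) / d ^ (N + 1)) := by
        rw [intervalIntegral.integral_congr hinner, intervalIntegral.integral_congr houter,
          intervalIntegral.integral_const_mul, intervalIntegral.integral_const_mul,
          integral_rpow (Or.inl (by linarith)), integral_rpow_mul_log_inv_pow hd]
        simp [hd.ne']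
    _ = _ := by
        rw [← exp_mul]
        field_simp
        ring_nf

lemma sphereArea_pos {N : ℕ} (hN : N ≠ 0) : 0 < sphereArea N :=
  mul_pos (by positivity)
    (ENNReal.toReal_pos (Metric.measure_ball_pos _ _ one_pos).ne' measure_ball_lt_top.ne)

lemma integral_fun_norm_eq_sphereArea_mul {N : ℕ} (hN : N ≠ 0) (f : ℝ → ℝ) :
    ∫ x : EuclideanSpace ℝ (Fin N), f ‖x‖ = sphereArea N * ∫ r in Ioi 0, r ^ (N - 1) * f r := by
  have : Nonempty (Fin N) := ⟨⟨0, Nat.pos_of_ne_zero hN⟩⟩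
  rw [integral_fun_norm_addHaar volume f]
  simp only [finrank_euclideanSpace_fin, nsmul_eq_mul, smul_eq_mul, sphereArea, Measure.real]
  ring

lemma rpow_neg_one_div_pow {x : ℝ} (hx : 0 ≤ x) {N : ℕ} (hN : N ≠ 0) :
    (x ^ (-1 / N : ℝ)) ^ N = x⁻¹ := by
  rw [neg_div, one_div, rpow_neg hx, inv_pow, rpow_inv_natCast_pow hx hN]

lemma toReal_lintegral_moser_eq {N : ℕ} (hN : N ≠ 0) {β : ℝ} (hβ : β < N) (γ : ℝ) (n : ℕ) :
    (∫⁻ x, ENNReal.ofReal (|moser N β n x| ^ N * ‖x‖ ^ (-γ))).toReal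
      = sphereArea N * ∫ r in Ioi 0, r ^ ((N - γ) - 1) *
          moserProfile (sphereArea N ^ (-(1 : ℝ) / N) * ((n : ℝ) / (N - β)) ^ (-(1 : ℝ) / N))
            (n / (N - β)) r ^ N := by
  set b : ℝ := n / (N - β)
  have hb : 0 ≤ b := div_nonneg (by positivity) (by linarith)
  set A : ℝ := sphereArea N ^ (-(1 : ℝ) / N) * b ^ (-(1 : ℝ) / N)
  have hA : 0 ≤ A := by have := (sphereArea_pos hN).le; positivity
  have hmeas :
      Measurable fun x : EuclideanSpace ℝ (Fin N) => |moser N β n x| ^ N * ‖x‖ ^ (-γ) := by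
    simp only [moser_eq_moserProfile]
    exact (((measurable_moserProfile A b).comp measurable_norm).abs.pow_const N).mul (by fun_prop)
  have hradial : ∀ r ∈ Ioi (0 : ℝ), r ^ (N - 1) * (|moserProfile A b r| ^ N * r ^ (-γ))
      = r ^ ((N - γ) - 1) * moserProfile A b r ^ N := fun r hr => by
    rw [abs_of_nonneg (moserProfile_nonneg hA hb r), ← rpow_natCast,
      Nat.cast_sub (Nat.one_le_iff_ne_zero.mpr hN), mul_comm (moserProfile A b r ^ N),
      ← mul_assoc, ← rpow_add hr]
    congr 2
    ring
  rw [← integral_eq_lintegral_of_nonneg_ae (ae_of_all _ fun x => by positivity)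
    hmeas.aestronglyMeasurable]
  simp only [moser_eq_moserProfile]
  rw [integral_fun_norm_eq_sphereArea_mul hN (fun r => |moserProfile A b r| ^ N * r ^ (-γ)),
    setIntegral_congr_fun measurableSet_Ioi hradial]

lemma natCast_mul_toReal_lintegral_moser {N : ℕ} (hN : N ≠ 0) {β γ : ℝ} (hγβ : γ ≤ β)
    (hβ : β < N) {n : ℕ} (hn : n ≠ 0) :
    (n : ℝ) * (∫⁻ x, ENNReal.ofReal (|moser N β n x| ^ N * ‖x‖ ^ (-γ))).toReal
      = (N - β) / (N - γ) ^ (N + 1) *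
          (((N - γ) * (n / (N - β))) ^ N * exp (-((N - γ) * (n / (N - β))))
            + ∫ t in 0..(N - γ) * (n / (N - β)), exp (-t) * t ^ N) := by
  have hβ' : 0 < (N : ℝ) - β := by linarith
  have hb : 0 < (n : ℝ) / (N - β) := div_pos (by positivity) hβ'
  have hω := sphereArea_pos hN
  have hn_eq : (n : ℝ) = (N - β) * (n / (N - β)) := by field_simp
  rw [toReal_lintegral_moser_eq hN hβ, integral_Ioi_rpow_mul_moserProfile_pow _ hb
    (by linarith) hN, mul_pow, rpow_neg_one_div_pow hω.le hN,
    rpow_neg_one_div_pow hb.le hN]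
  nth_rw 1 [hn_eq]
  field_simp

lemma tendsto_pow_mul_exp_neg_add_integral_atTop (N : ℕ) :
    Tendsto (fun X : ℝ => X ^ N * exp (-X) + ∫ t in 0..X, exp (-t) * t ^ N)
      atTop (𝓝 (Gamma (N + 1))) := by
  have hGamma : ∫ t in Ioi 0, exp (-t) * t ^ N = Gamma (N + 1) := by
    rw [Gamma_eq_integral (by positivity)]
    simp only [add_sub_cancel_right, rpow_natCast]
  have hint : IntegrableOn (fun t : ℝ => exp (-t) * t ^ N) (Ioi 0) := by
    simpa using GammaIntegral_convergent (s := N + 1) (by positivity)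
  simpa [← hGamma] using (tendsto_pow_mul_exp_neg_atTop_nhds_zero N).add
    (intervalIntegral_tendsto_integral_Ioi 0 hint tendsto_id)

theorem moser_weighted_LN_norm_asymptotics (N : ℕ) (hN : 2 ≤ N) (β γ : ℝ)
    (hγβ : γ ≤ β) (hβ : β < N) :
    Filter.Tendsto
      (fun n : ℕ => (n : ℝ) *
        (∫⁻ x, ENNReal.ofReal (|moser N β n x| ^ N * ‖x‖ ^ (-γ))).toReal)
      Filter.atTop
      (nhds (((N : ℝ) - β) * Real.Gamma (N + 1) / ((N : ℝ) - γ) ^ (N + 1))) := by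
  have hX : Tendsto (fun n : ℕ => ((N : ℝ) - γ) * (n / (N - β))) atTop atTop :=
    (tendsto_natCast_atTop_atTop.atTop_div_const (by linarith)).const_mul_atTop (by linarith)
  have hlim := ((tendsto_pow_mul_exp_neg_add_integral_atTop N).comp hX).const_mul
    (((N : ℝ) - β) / ((N : ℝ) - γ) ^ (N + 1))
  rw [div_mul_eq_mul_div] at hlim
  refine hlim.congr' ((eventually_ne_atTop 0).mono fun n hn => ?_)
  exact (natCast_mul_toReal_lintegral_moser (by omega) hγβ hβ hn).symm
end

section
/- Let $N \ge 2$, $\gamma < N$, $F(x) = \left(\frac{N-\gamma}{N}\right)^{\frac{N}{N-\gamma}} |x|^{\frac{\gamma}{N-\gamma}} x$, and let $u : \mathbb{R}^N \to \mathbb{R}$ be a radial differentiable function (i.e., $u(x) = \varphi(|x|)$ for some differentiable $\varphi$). Define $v(x) = \left(\frac{N-\gamma}{N}\right)^{\frac{N-1}{N}} u(F(x))$. Then for all $x \ne 0$, $|\nabla v(x)| = \left(\frac{N-\gamma}{N}\right)^{\frac{N-1}{N}} |F(x)|^{\frac{\gamma}{N}} |\nabla u(F(x))| = (\det DF(x))^{1/N}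 |\nabla u(F(x))|$, i.e., the pointwise gradient inequality becomes an equality for radial functions, for every $\gamma < N$ (including negative $\gamma$). -/
/-!
Put `t = N / (N - γ)` and `C = t⁻¹ ^ ((N - 1) / N)`. Then `F x = (ρ ‖x‖ / ‖x‖) • x` with
`ρ r = (r / t) ^ t`, so `v` is radial with profile `C • φ ∘ ρ`, and `‖∇v x‖ = C |φ' (ρ r)| ρ' r`,
`‖∇u (F x)‖ = |φ' (ρ r)|`. The profile solves `ρ' = ρ ^ (γ / N)`, which is the first equality.
`DF x` is `ρ r / r` times the identity plus a rank-one map, so by the matrix determinant lemma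
`det DF x = (ρ / r) ^ (N - 1) ρ'`, and `ρ' = t ρ / r` turns its `N`-th root into `C ρ'`.
-/

open Module

theorem LinearMap.det_id_add_smulRight {R M : Type*} [CommRing R] [AddCommGroup M] [Module R M]
    [Module.Free R M] [Module.Finite R M] (f : M →ₗ[R] R) (x : M) :
    LinearMap.det (LinearMap.id + f.smulRight x) = 1 + f x := by
  classical
  let b := Module.Free.chooseBasis R M
  have hM : LinearMap.toMatrix b b (f.smulRight x) =
      Matrix.replicateCol Unit (b.repr x) * Matrix.replicateRow Unit (fun j => f (b j)) := by
    ext i j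
    simp [LinearMap.toMatrix_apply, Matrix.mul_apply, mul_comm]
  rw [← LinearMap.det_toMatrix b, map_add, LinearMap.toMatrix_id, hM,
    Matrix.det_one_add_replicateCol_mul_replicateRow]
  congr 1
  simpa only [dotProduct, map_sum, map_smul, smul_eq_mul, mul_comm] using congrArg f (b.sum_repr x)

theorem inv_rpow_mul_rpow_sub_one {t r : ℝ} (ht : 0 < t) (hr : 0 ≤ r) :
    t⁻¹ ^ t * r ^ (t - 1) = t⁻¹ * (r / t) ^ (t - 1) := by
  rw [Real.div_rpow hr ht.le, Real.rpow_sub_one ht.ne', Real.inv_rpow ht.le]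
  field_simp

theorem hasDerivAt_div_rpow_self {t r : ℝ} (ht : 0 < t) (hr : 0 < r) :
    HasDerivAt (fun s => (s / t) ^ t) ((r / t) ^ (t - 1)) r := by
  have h := ((hasDerivAt_id r).div_const t).rpow_const (p := t) (Or.inl (by positivity))
  rwa [one_div, inv_mul_cancel₀ ht.ne', one_mul] at h

theorem inv_mul_pow_mul_rpow_one_div {t c : ℝ} (ht : 0 < t) (hc : 0 ≤ c) {n : ℕ}
    (hn : n ≠ 0) : ((t⁻¹ * c) ^ n * t) ^ (1 / n : ℝ) = t⁻¹ ^ (((n : ℝ) - 1) / n) * c := by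
  have hpow : t * t⁻¹ ^ n = t⁻¹ ^ ((n : ℝ) - 1) := by
    rw [Real.rpow_sub_one (by positivity), Real.rpow_natCast]
    field_simp
  rw [mul_pow, mul_comm, ← mul_assoc, Real.mul_rpow (by positivity) (by positivity), hpow, one_div,
    Real.pow_rpow_inv_natCast hc hn, ← Real.rpow_mul (by positivity), div_eq_mul_inv]

section NormedSpace

variable {E : Type*} [NormedAddCommGroup E] [NormedSpace ℝ E]

theorem hasFDerivAt_comp_norm_smul {g : ℝ → ℝ} {g' : ℝ} {x : E}
    (hnorm : DifferentiableAt ℝ (‖·‖) x) (hg : HasDerivAt g g' ‖x‖) :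
    HasFDerivAt (fun y => g ‖y‖ • y)
      (g ‖x‖ • ContinuousLinearMap.id ℝ E + (g' • fderiv ℝ (‖·‖) x).smulRight x) x :=
  (hg.comp_hasFDerivAt x hnorm.hasFDerivAt).smul (hasFDerivAt_id x)

theorem det_fderiv_comp_norm_smul [FiniteDimensional ℝ E] {g : ℝ → ℝ} {g' : ℝ} {x : E}
    (hnorm : DifferentiableAt ℝ (‖·‖) x) (hg : HasDerivAt g g' ‖x‖) (hgx : g ‖x‖ ≠ 0) :
    LinearMap.det (fderiv ℝ (fun y => g ‖y‖ • y) x : E →ₗ[ℝ] E) =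
      g ‖x‖ ^ finrank ℝ E * (1 + g' * ‖x‖ / g ‖x‖) := by
  have hsplit : ((g ‖x‖ • ContinuousLinearMap.id ℝ E + (g' • fderiv ℝ (‖·‖) x).smulRight x :
      E →L[ℝ] E) : E →ₗ[ℝ] E) =
      g ‖x‖ • (LinearMap.id + ((g ‖x‖)⁻¹ • g' • (fderiv ℝ (‖·‖) x : E →ₗ[ℝ] ℝ)).smulRight x) := by
    ext y
    simp [smul_smul, mul_assoc, hgx]
  rw [(hasFDerivAt_comp_norm_smul hnorm hg).fderiv, hsplit, LinearMap.det_smul,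
    LinearMap.det_id_add_smulRight]
  simp only [LinearMap.smul_apply, ContinuousLinearMap.coe_coe, hnorm.fderiv_norm_self, smul_eq_mul]
  field_simp

theorem norm_inv_rpow_mul_rpow_smul {t : ℝ} (ht : 0 < t) (y : E) :
    ‖(t⁻¹ ^ t * ‖y‖ ^ (t - 1)) • y‖ = (‖y‖ / t) ^ t := by
  rw [norm_smul, Real.norm_of_nonneg (by positivity), mul_assoc,
    ← Real.rpow_add_one' (norm_nonneg y) (by simpa using ht.ne'), sub_add_cancel,
    Real.div_rpow (norm_nonneg y) ht.le, Real.inv_rpow ht.le, div_eq_inv_mul]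

end NormedSpace

section InnerProductSpace

variable {E : Type*} [NormedAddCommGroup E] [InnerProductSpace ℝ E]

theorem norm_gradient_comp_norm [CompleteSpace E] {ψ : ℝ → ℝ} {d : ℝ} {x : E} (hx : x ≠ 0)
    (hψ : HasDerivAt ψ d ‖x‖) : ‖gradient (fun y => ψ ‖y‖) x‖ = |d| := by
  have hnorm : DifferentiableAt ℝ (‖·‖) x := differentiableAt_id.norm ℝ hx
  have : Nontrivial E := ⟨⟨x, 0, hx⟩⟩
  have hderiv : HasFDerivAt (fun y => ψ ‖y‖) (d • fderiv ℝ (‖·‖) x) x :=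
    hψ.comp_hasFDerivAt x hnorm.hasFDerivAt
  rw [gradient, LinearIsometryEquiv.norm_map, hderiv.fderiv, norm_smul, norm_fderiv_norm hnorm,
    Real.norm_eq_abs, mul_one]

theorem det_fderiv_mul_rpow_norm_smul [FiniteDimensional ℝ E] {a e : ℝ} (ha : a ≠ 0) {x : E}
    (hx : x ≠ 0) :
    LinearMap.det (fderiv ℝ (fun y => (a * ‖y‖ ^ e) • y) x : E →ₗ[ℝ] E) =
      (a * ‖x‖ ^ e) ^ finrank ℝ E * (1 + e) := by
  have hr : 0 < ‖x‖ := norm_pos_iff.2 hx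
  have hg : HasDerivAt (fun s => a * s ^ e) (a * (e * ‖x‖ ^ (e - 1))) ‖x‖ :=
    (Real.hasDerivAt_rpow_const (Or.inl hr.ne')).const_mul a
  rw [det_fderiv_comp_norm_smul (differentiableAt_id.norm ℝ hx) hg (by positivity),
    Real.rpow_sub_one hr.ne']
  field_simp

end InnerProductSpace

section PowerMap

variable {E : Type*} [NormedAddCommGroup E] [InnerProductSpace ℝ E] {t : ℝ} {F : E → E}

theorem norm_gradient_comp_norm_power_map [CompleteSpace E] (ht : 0 < t)
    (hF : ∀ y, F y = (t⁻¹ ^ t * ‖y‖ ^ (t - 1)) • y) {φ : ℝ → ℝ} (hφ : Differentiable ℝ φ)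
    (c : ℝ) {x : E} (hx : x ≠ 0) :
    ‖gradient (fun y => c * φ ‖F y‖) x‖ = |c| * |deriv φ ‖F x‖| * (‖x‖ / t) ^ (t - 1) := by
  have hψ : HasDerivAt (fun s => c * φ ((s / t) ^ t))
      (c * (deriv φ ((‖x‖ / t) ^ t) * (‖x‖ / t) ^ (t - 1))) ‖x‖ :=
    ((hφ _).hasDerivAt.comp _ (hasDerivAt_div_rpow_self ht (norm_pos_iff.2 hx))).const_mul c
  simp_rw [hF, norm_inv_rpow_mul_rpow_smul ht]
  rw [norm_gradient_comp_norm hx hψ, abs_mul, abs_mul,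
    abs_of_nonneg (Real.rpow_nonneg (div_nonneg (norm_nonneg x) ht.le) _), mul_assoc]

theorem det_fderiv_power_map [FiniteDimensional ℝ E] (ht : 0 < t)
    (hF : ∀ y, F y = (t⁻¹ ^ t * ‖y‖ ^ (t - 1)) • y) {x : E} (hx : x ≠ 0) :
    LinearMap.det (fderiv ℝ F x : E →ₗ[ℝ] E) = (t⁻¹ * (‖x‖ / t) ^ (t - 1)) ^ finrank ℝ E * t := by
  rw [show F = _ from funext hF, det_fderiv_mul_rpow_norm_smul (by positivity) hx,
    inv_rpow_mul_rpow_sub_one ht (norm_nonneg x), add_sub_cancel]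

end PowerMap

theorem gradient_equality_for_radial_functions_general (N : ℕ) (γ : ℝ) (hγ : γ < N)
    (F : EuclideanSpace ℝ (Fin N) → EuclideanSpace ℝ (Fin N))
    (hF : ∀ x, F x = ((((N : ℝ) - γ) / N) ^ ((N : ℝ) / ((N : ℝ) - γ)) *
      ‖x‖ ^ (γ / ((N : ℝ) - γ))) • x)
    (u : EuclideanSpace ℝ (Fin N) → ℝ) (φ : ℝ → ℝ) (hφ : Differentiable ℝ φ)
    (hu : ∀ x, u x = φ ‖x‖)
    (v : EuclideanSpace ℝ (Fin N) → ℝ)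
    (hv : ∀ x, v x = (((N : ℝ) - γ) / N) ^ (((N : ℝ) - 1) / N) * u (F x)) :
    ∀ x : EuclideanSpace ℝ (Fin N), x ≠ 0 →
      ‖gradient v x‖ = (((N : ℝ) - γ) / N) ^ (((N : ℝ) - 1) / N) *
          ‖F x‖ ^ (γ / N) * ‖gradient u (F x)‖ ∧
      ‖gradient v x‖ = (LinearMap.det (fderiv ℝ F x).toLinearMap) ^ ((1 : ℝ) / N) *
          ‖gradient u (F x)‖ := by
  intro x hx
  have hN : N ≠ 0 := by rintro rfl; exact hx (Subsingleton.elim _ _)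
  have hNγ : 0 < (N : ℝ) - γ := sub_pos.2 hγ
  set t := (N : ℝ) / (N - γ) with ht_def
  have ht : 0 < t := div_pos (by positivity) hNγ
  have hB : ((N : ℝ) - γ) / N = t⁻¹ := (inv_div _ _).symm
  have he : γ / ((N : ℝ) - γ) = t - 1 := by rw [ht_def, div_sub_one hNγ.ne', sub_sub_cancel]
  have hγN : γ / (N : ℝ) = 1 - t⁻¹ := by rw [← hB, one_sub_div (by positivity), sub_sub_cancel]
  rw [hB, he] at hF
  rw [hB, hγN]
  have hFnorm : ‖F x‖ = (‖x‖ / t) ^ t := by rw [hF, norm_inv_rpow_mul_rpow_smul ht]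
  have hFx : F x ≠ 0 := by
    rw [← norm_pos_iff, hFnorm]
    exact Real.rpow_pos_of_pos (div_pos (norm_pos_iff.2 hx) ht) _
  have hgu : ‖gradient u (F x)‖ = |deriv φ ‖F x‖| := by
    rw [show u = fun y => φ ‖y‖ from funext hu]
    exact norm_gradient_comp_norm hFx (hφ _).hasDerivAt
  have hgv : ‖gradient v x‖ =
      t⁻¹ ^ (((N : ℝ) - 1) / N) * |deriv φ ‖F x‖| * (‖x‖ / t) ^ (t - 1) := by
    rw [show v = fun y => t⁻¹ ^ (((N : ℝ) - 1) / N) * φ ‖F y‖ from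
        funext fun y => by rw [hv, hB, hu],
      norm_gradient_comp_norm_power_map ht hF hφ _ hx, abs_of_pos (by positivity)]
  refine ⟨?_, ?_⟩
  · rw [hgv, hgu, hFnorm, ← Real.rpow_mul (by positivity),
      show t * (1 - t⁻¹) = t - 1 by field_simp]
    ring
  · rw [hgv, hgu, det_fderiv_power_map ht hF hx, finrank_euclideanSpace_fin,
      inv_mul_pow_mul_rpow_one_div ht (by positivity) hN]
    ring

theorem gradient_equality_for_radial_functions (N : ℕ) (hN : 2 ≤ N) (γ : ℝ) (hγ : γ < N)
    (F : EuclideanSpace ℝ (Fin N) → EuclideanSpace ℝ (Fin N))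
    (hF : ∀ x, F x = ((((N : ℝ) - γ) / N) ^ ((N : ℝ) / ((N : ℝ) - γ)) *
      ‖x‖ ^ (γ / ((N : ℝ) - γ))) • x)
    (u : EuclideanSpace ℝ (Fin N) → ℝ) (φ : ℝ → ℝ) (hφ : Differentiable ℝ φ)
    (hu : ∀ x, u x = φ ‖x‖)
    (v : EuclideanSpace ℝ (Fin N) → ℝ)
    (hv : ∀ x, v x = (((N : ℝ) - γ) / N) ^ (((N : ℝ) - 1) / N) * u (F x)) :
    ∀ x : EuclideanSpace ℝ (Fin N), x ≠ 0 →
      ‖gradient v x‖ = (((N : ℝ) - γ) / N) ^ (((N : ℝ) - 1) / N) *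
          ‖F x‖ ^ (γ / N) * ‖gradient u (F x)‖ ∧
      ‖gradient v x‖ = (LinearMap.det (fderiv ℝ F x).toLinearMap) ^ ((1 : ℝ) / N) *
          ‖gradient u (F x)‖ :=
  gradient_equality_for_radial_functions_general N γ hγ F hF u φ hφ hu v hv
end
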